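/- There exist positive constants C₃ and C₄ such that C₃(T* − t)^{−1} ≤ H(y(t)) ≤ C₄(T* − t)^{−1} for all t ∈ [t₀, T*). -/

import Mathlib

open Set Real Filter Topology MeasureTheory

noncomputable section

/-- The action of an `n × n` real matrix on `EuclideanSpace ℝ (Fin n)` by
matrix-vector multiplication. -/
def mulVecE {n : ℕ} (A : Matrix (Fin n) (Fin n) ℝ) (x : EuclideanSpace ℝ (Fin n)) :
    EuclideanSpace ℝ (Fin n) :=
  WithLp.toLp 2 (A.mulVec x)

/-!
Put `z = S y`. Then `z' = -H(y) D z + S f`, and `⟪z, D z⟫ ≥ κ ‖z‖²` because `D` is diagonal with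
positive entries. Homogeneity and compactness of the unit sphere give `H(y) ≍ ‖z‖^(-α)`, so
`ψ = ‖z‖^α` has `ψ' = α ‖z‖^(α-2) ⟪z, z'⟫ ∈ [-B - K ‖z‖^δ, -b + K ‖z‖^δ]`. Since `z → 0`, near `T*`
the derivative `ψ'` lies between two negative constants, and `ψ → 0` then forces
`ψ(t) ≍ T* - t`; on the compact rest of `[t₀, T*)` this is continuity and positivity.
Hence `H(y(t)) ≍ ψ(t)⁻¹ ≍ (T* - t)⁻¹`.
-/

open scoped RealInnerProductSpace

section NormedSpace

variable {E F : Type*} [NormedAddCommGroup E] [NormedSpace ℝ E]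
  [NormedAddCommGroup F] [NormedSpace ℝ F]

theorem exists_norm_rpow_bounds_of_homogeneous [ProperSpace E] {α : ℝ} {H : E → ℝ}
    (hHhom : ∀ x : E, x ≠ 0 → ∀ s : ℝ, 0 < s → H (s • x) = s ^ (-α) * H x)
    (hHpos : ∀ x : E, ‖x‖ = 1 → 0 < H x) (hHcont : ContinuousOn H (Metric.sphere 0 1)) :
    ∃ h₁ h₂ : ℝ, 0 < h₁ ∧ 0 < h₂ ∧
      ∀ x ≠ 0, h₁ * ‖x‖ ^ (-α) ≤ H x ∧ H x ≤ h₂ * ‖x‖ ^ (-α) := by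
  have hsphere : ∀ x : E, x ≠ 0 → ‖x‖⁻¹ • x ∈ Metric.sphere (0 : E) 1 := fun x hx => by
    simp [norm_smul, hx]
  rcases (Metric.sphere (0 : E) 1).eq_empty_or_nonempty with hempty | hne
  · exact ⟨1, 1, one_pos, one_pos, fun x hx => absurd (hsphere x hx) (by simp [hempty])⟩
  obtain ⟨a, ha, hmin⟩ := (isCompact_sphere (0 : E) 1).exists_isMinOn hne hHcont
  obtain ⟨b, hb, hmax⟩ := (isCompact_sphere (0 : E) 1).exists_isMaxOn hne hHcont
  have hHa : 0 < H a := hHpos a (by simpa using ha)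
  refine ⟨H a, H b, hHa, hHa.trans_le (hmin hb), fun x hx => ?_⟩
  have hnx : 0 < ‖x‖ := norm_pos_iff.mpr hx
  have hHx : H x = ‖x‖ ^ (-α) * H (‖x‖⁻¹ • x) := by
    rw [← hHhom _ (smul_ne_zero (inv_ne_zero hnx.ne') hx) _ hnx, smul_inv_smul₀ hnx.ne']
  rw [hHx, mul_comm (H a), mul_comm (H b)]
  have hpow : 0 ≤ ‖x‖ ^ (-α) := by positivity
  exact ⟨mul_le_mul_of_nonneg_left (hmin (hsphere x hx)) hpow,
    mul_le_mul_of_nonneg_left (hmax (hsphere x hx)) hpow⟩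

theorem ContinuousLinearEquiv.exists_norm_rpow_le (e : E ≃L[ℝ] F) (p : ℝ) :
    ∃ C > 0, ∀ x, ‖x‖ ^ p ≤ C * ‖e x‖ ^ p := by
  have hθ : (fun x : E => ‖x‖) =Θ[⊤] fun x => ‖e x‖ :=
    ⟨(e.isBigO_comp_rev id ⊤).norm_norm, (e.isBigO_comp id ⊤).norm_norm⟩
  obtain ⟨C, hC, hbound⟩ :=
    (hθ.rpow (r := p) (.of_forall fun _ => norm_nonneg _)
      (.of_forall fun _ => norm_nonneg _)).1.exists_pos
  refine ⟨C, hC, fun x => ?_⟩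
  simpa [abs_of_nonneg, Real.rpow_nonneg] using Asymptotics.isBigOWith_top.mp hbound x

theorem ContinuousLinearEquiv.exists_norm_apply_le_mul_rpow (e : E ≃L[ℝ] F) (M p : ℝ) :
    ∃ K, ∀ v x : E, ‖v‖ ≤ M * ‖x‖ ^ p → ‖e v‖ ≤ K * ‖e x‖ ^ p := by
  obtain ⟨C, hC, hle⟩ := e.exists_norm_rpow_le p
  refine ⟨‖(e : E →L[ℝ] F)‖ * |M| * C, fun v x hv => ?_⟩
  calc ‖e v‖ ≤ ‖(e : E →L[ℝ] F)‖ * ‖v‖ := (e : E →L[ℝ] F).le_opNorm v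
    _ ≤ ‖(e : E →L[ℝ] F)‖ * (|M| * (C * ‖e x‖ ^ p)) := by
      gcongr
      exact hv.trans (mul_le_mul (le_abs_self M) (hle x) (by positivity) (abs_nonneg M))
    _ = _ := by ring

theorem ContinuousLinearEquiv.exists_norm_rpow_bounds_of_homogeneous [ProperSpace E]
    (e : E ≃L[ℝ] F) {α : ℝ} {H : E → ℝ}
    (hHhom : ∀ x : E, x ≠ 0 → ∀ s : ℝ, 0 < s → H (s • x) = s ^ (-α) * H x)
    (hHpos : ∀ x : E, ‖x‖ = 1 → 0 < H x) (hHcont : ContinuousOn H (Metric.sphere 0 1)) :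
    ∃ g₁ g₂ : ℝ, 0 < g₁ ∧ 0 < g₂ ∧
      ∀ x ≠ 0, g₁ * ‖e x‖ ^ (-α) ≤ H x ∧ H x ≤ g₂ * ‖e x‖ ^ (-α) := by
  obtain ⟨h₁, h₂, hh₁, hh₂, hH⟩ := _root_.exists_norm_rpow_bounds_of_homogeneous hHhom hHpos hHcont
  obtain ⟨C₁, hC₁, hle₁⟩ := e.symm.exists_norm_rpow_le (-α)
  obtain ⟨C₂, hC₂, hle₂⟩ := e.exists_norm_rpow_le (-α)
  refine ⟨h₁ / C₁, h₂ * C₂, by positivity, by positivity, fun x hx => ⟨?_, ?_⟩⟩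
  · calc h₁ / C₁ * ‖e x‖ ^ (-α) ≤ h₁ / C₁ * (C₁ * ‖x‖ ^ (-α)) := by
          gcongr; simpa using hle₁ (e x)
      _ = h₁ * ‖x‖ ^ (-α) := by field_simp
      _ ≤ H x := (hH x hx).1
  · calc H x ≤ h₂ * ‖x‖ ^ (-α) := (hH x hx).2
      _ ≤ h₂ * (C₂ * ‖e x‖ ^ (-α)) := by gcongr; exact hle₂ x
      _ = h₂ * C₂ * ‖e x‖ ^ (-α) := by ring

end NormedSpace

theorem Matrix.exists_pos_mul_norm_sq_le_inner_toEuclideanCLM_diagonal {ι : Type*} [Fintype ι]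
    [DecidableEq ι] {d : ι → ℝ} (hd : ∀ i, 0 < d i) :
    ∃ c > 0, ∀ x : EuclideanSpace ℝ ι,
      c * ‖x‖ ^ 2 ≤ ⟪x, toEuclideanCLM (𝕜 := ℝ) (diagonal d) x⟫ := by
  obtain ⟨c, hc, hcd⟩ : ∃ c > 0, ∀ i, c ≤ d i := by
    rcases isEmpty_or_nonempty ι with _ | _
    · exact ⟨1, one_pos, isEmptyElim⟩
    · obtain ⟨i₀, hi₀⟩ := Finite.exists_min d
      exact ⟨d i₀, hd i₀, hi₀⟩
  refine ⟨c, hc, fun x => ?_⟩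
  simp only [inner_toEuclideanCLM, EuclideanSpace.real_norm_sq_eq, dotProduct, mulVec_diagonal,
    Finset.mul_sum]
  exact Finset.sum_le_sum fun i _ => by nlinarith [hcd i, sq_nonneg (x i)]

theorem toEuclideanCLM_apply_mulVecE_conj {n : ℕ} {S D : Matrix (Fin n) (Fin n) ℝ} (hS : IsUnit S)
    (x : EuclideanSpace ℝ (Fin n)) :
    Matrix.toEuclideanCLM (𝕜 := ℝ) S (mulVecE (S⁻¹ * D * S) x) =
      Matrix.toEuclideanCLM (𝕜 := ℝ) D (Matrix.toEuclideanCLM (𝕜 := ℝ) S x) := by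
  change (Matrix.toEuclideanCLM (𝕜 := ℝ) S * Matrix.toEuclideanCLM (𝕜 := ℝ) (S⁻¹ * D * S)) x =
    (Matrix.toEuclideanCLM (𝕜 := ℝ) D * Matrix.toEuclideanCLM (𝕜 := ℝ) S) x
  rw [← map_mul, ← map_mul, ← Matrix.mul_assoc, ← Matrix.mul_assoc,
    Matrix.mul_nonsing_inv _ ((Matrix.isUnit_iff_isUnit_det S).mp hS), Matrix.one_mul]

theorem sub_mul_le_of_hasDerivAt_le {ψ ψ' : ℝ → ℝ} {a T c L : ℝ}
    (hψ : ∀ x ∈ Ioo a T, HasDerivAt ψ (ψ' x) x) (hψ' : ∀ x ∈ Ioo a T, ψ' x ≤ c)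
    (hlim : Tendsto ψ (𝓝[<] T) (𝓝 L)) {t : ℝ} (ht : t ∈ Ioo a T) :
    L - c * (T - t) ≤ ψ t := by
  have hderiv : ∀ x ∈ Ioo a T, HasDerivAt (fun s => ψ s - s * c) (ψ' x - c) x := fun x hx =>
    (hψ x hx).sub (hasDerivAt_mul_const c)
  have hanti : AntitoneOn (fun s => ψ s - s * c) (Ioo a T) := by
    refine antitoneOn_of_hasDerivWithinAt_nonpos (f' := fun x => ψ' x - c) (convex_Ioo a T)
      (fun x hx => (hderiv x hx).continuousAt.continuousWithinAt) (fun x hx => ?_) fun x hx => ?_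
    · rw [interior_Ioo] at hx ⊢; exact (hderiv x hx).hasDerivWithinAt
    · rw [interior_Ioo] at hx; linarith [hψ' x hx]
  have hlim' : Tendsto (fun s => ψ s - s * c) (𝓝[<] T) (𝓝 (L - T * c)) :=
    hlim.sub ((continuous_mul_const c).tendsto T |>.mono_left nhdsWithin_le_nhds)
  have hle : L - T * c ≤ ψ t - t * c := by
    refine le_of_tendsto hlim' ?_
    filter_upwards [Ioo_mem_nhdsLT ht.2] with s hs
    exact hanti ht ⟨ht.1.trans hs.1, hs.2⟩ hs.1.le
  linarith

theorem exists_mul_sub_bounds_of_continuousOn_Icc {ψ : ℝ → ℝ} {t₀ t₁ T : ℝ}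
    (hψ : ContinuousOn ψ (Icc t₀ t₁)) (hpos : ∀ t ∈ Icc t₀ t₁, 0 < ψ t) (hT : t₁ < T) :
    ∃ K₁ K₂ : ℝ, 0 < K₁ ∧ ∀ t ∈ Icc t₀ t₁, K₁ * (T - t) ≤ ψ t ∧ ψ t ≤ K₂ * (T - t) := by
  rcases (Icc t₀ t₁).eq_empty_or_nonempty with hempty | hne
  · exact ⟨1, 1, one_pos, by simp [hempty]⟩
  have hTt : ∀ t ∈ Icc t₀ t₁, 0 < T - t := fun t ht => by linarith [ht.2]
  have hq : ContinuousOn (fun t => ψ t / (T - t)) (Icc t₀ t₁) :=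
    hψ.div (continuousOn_const.sub continuousOn_id) fun t ht => (hTt t ht).ne'
  obtain ⟨a, ha, hmin⟩ := isCompact_Icc.exists_isMinOn hne hq
  obtain ⟨b, -, hmax⟩ := isCompact_Icc.exists_isMaxOn hne hq
  refine ⟨ψ a / (T - a), ψ b / (T - b), div_pos (hpos a ha) (hTt a ha), fun t ht => ?_⟩
  have hψt : ψ t = ψ t / (T - t) * (T - t) := by field_simp [(hTt t ht).ne']
  rw [hψt]
  exact ⟨mul_le_mul_of_nonneg_right (hmin ht) (hTt t ht).le,
    mul_le_mul_of_nonneg_right (hmax ht) (hTt t ht).le⟩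

theorem exists_mul_sub_bounds_Ico_of_bounds_Ioo {ψ : ℝ → ℝ} {t₀ a T b B : ℝ}
    (hψ : ContinuousOn ψ (Ico t₀ T)) (hpos : ∀ t ∈ Ico t₀ T, 0 < ψ t) (ha : a < T) (hb : 0 < b)
    (hnear : ∀ t ∈ Ioo a T, b * (T - t) ≤ ψ t ∧ ψ t ≤ B * (T - t)) :
    ∃ K₁ K₂ : ℝ, 0 < K₁ ∧ ∀ t ∈ Ico t₀ T, K₁ * (T - t) ≤ ψ t ∧ ψ t ≤ K₂ * (T - t) := by
  obtain ⟨t₁, ht₁⟩ := exists_between ha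
  have hsub : Icc t₀ t₁ ⊆ Ico t₀ T := Icc_subset_Ico_right ht₁.2
  obtain ⟨K₁, K₂, hK₁, hK⟩ := exists_mul_sub_bounds_of_continuousOn_Icc (hψ.mono hsub)
    (fun t ht => hpos t (hsub ht)) ht₁.2
  refine ⟨min b K₁, max B K₂, lt_min hb hK₁, fun t ht => ?_⟩
  have hTt : 0 ≤ T - t := by linarith [ht.2]
  have hmin : min b K₁ * (T - t) ≤ b * (T - t) ∧ min b K₁ * (T - t) ≤ K₁ * (T - t) :=
    ⟨by gcongr; exact min_le_left _ _, by gcongr; exact min_le_right _ _⟩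
  have hmax : B * (T - t) ≤ max B K₂ * (T - t) ∧ K₂ * (T - t) ≤ max B K₂ * (T - t) :=
    ⟨by gcongr; exact le_max_left _ _, by gcongr; exact le_max_right _ _⟩
  rcases le_or_gt t t₁ with h | h
  · have := hK t ⟨ht.1, h⟩; constructor <;> linarith
  · have := hnear t ⟨ht₁.1.trans h, ht.2⟩; constructor <;> linarith

section InnerProductSpace

variable {E : Type*} [NormedAddCommGroup E] [InnerProductSpace ℝ E]

theorem HasDerivAt.norm_rpow {z : ℝ → E} {z' : E} {t : ℝ} (hz : HasDerivAt z z' t)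
    (h0 : z t ≠ 0) (α : ℝ) :
    HasDerivAt (fun s => ‖z s‖ ^ α) (α * ‖z t‖ ^ (α - 2) * ⟪z t, z'⟫) t := by
  have hsq : ‖z t‖ ^ 2 ≠ 0 := by positivity
  have key := hz.norm_sq.rpow_const (p := α / 2) (.inl hsq)
  have hpow : ∀ s, (‖z s‖ ^ 2) ^ (α / 2) = ‖z s‖ ^ α := fun s => by
    rw [← Real.rpow_natCast, ← Real.rpow_mul (norm_nonneg _)]; congr 1; push_cast; ring
  simp only [hpow] at key
  convert key using 1
  rw [← Real.rpow_natCast, ← Real.rpow_mul (norm_nonneg _)]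
  push_cast
  ring_nf

theorem mul_rpow_mul_inner_bounds {L : E →L[ℝ] E} {κ g₁ g₂ G α : ℝ} {x : E} (hx : x ≠ 0)
    (hκ : 0 ≤ κ) (hL : κ * ‖x‖ ^ 2 ≤ ⟪x, L x⟫) (hg₁ : 0 ≤ g₁)
    (hG : g₁ * ‖x‖ ^ (-α) ≤ G ∧ G ≤ g₂ * ‖x‖ ^ (-α)) :
    g₁ * κ ≤ G * (‖x‖ ^ (α - 2) * ⟪x, L x⟫) ∧
      G * (‖x‖ ^ (α - 2) * ⟪x, L x⟫) ≤ g₂ * ‖L‖ := by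
  have hN : 0 < ‖x‖ := norm_pos_iff.mpr hx
  have hone : ‖x‖ ^ (-α) * (‖x‖ ^ (α - 2) * ‖x‖ ^ 2) = 1 := by
    rw [← rpow_natCast, ← rpow_add hN, ← rpow_add hN]; norm_num
  have hLx : ⟪x, L x⟫ ≤ ‖L‖ * ‖x‖ ^ 2 := by
    calc ⟪x, L x⟫ ≤ ‖x‖ * ‖L x‖ := real_inner_le_norm _ _
      _ ≤ ‖x‖ * (‖L‖ * ‖x‖) := by gcongr; exact L.le_opNorm x
      _ = ‖L‖ * ‖x‖ ^ 2 := by ring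
  have hpow : 0 ≤ ‖x‖ ^ (α - 2) := by positivity
  have hq : ‖x‖ ^ (α - 2) * (κ * ‖x‖ ^ 2) ≤ ‖x‖ ^ (α - 2) * ⟪x, L x⟫ := by gcongr
  have hq₀ : 0 ≤ ‖x‖ ^ (α - 2) * (κ * ‖x‖ ^ 2) := by positivity
  have hG₀ : 0 ≤ g₁ * ‖x‖ ^ (-α) := by positivity
  constructor
  · calc g₁ * κ = g₁ * ‖x‖ ^ (-α) * (‖x‖ ^ (α - 2) * (κ * ‖x‖ ^ 2)) := by
          linear_combination (-(g₁ * κ)) * hone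
      _ ≤ G * (‖x‖ ^ (α - 2) * ⟪x, L x⟫) := mul_le_mul hG.1 hq hq₀ (hG₀.trans hG.1)
  · calc G * (‖x‖ ^ (α - 2) * ⟪x, L x⟫)
          ≤ g₂ * ‖x‖ ^ (-α) * (‖x‖ ^ (α - 2) * (‖L‖ * ‖x‖ ^ 2)) :=
        mul_le_mul hG.2 (by gcongr) (hq₀.trans hq) ((hG₀.trans hG.1).trans hG.2)
      _ = g₂ * ‖L‖ := by linear_combination (g₂ * ‖L‖) * hone

theorem abs_rpow_mul_inner_le {K α δ : ℝ} {x v : E} (hx : x ≠ 0)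
    (hv : ‖v‖ ≤ K * ‖x‖ ^ (1 - α + δ)) :
    |‖x‖ ^ (α - 2) * ⟪x, v⟫| ≤ K * ‖x‖ ^ δ := by
  have hN : 0 < ‖x‖ := norm_pos_iff.mpr hx
  have hexp : ‖x‖ ^ (α - 2) * ‖x‖ * ‖x‖ ^ (1 - α + δ) = ‖x‖ ^ δ := by
    rw [← rpow_add_one hN.ne', ← rpow_add hN]; ring_nf
  calc |‖x‖ ^ (α - 2) * ⟪x, v⟫| = ‖x‖ ^ (α - 2) * |⟪x, v⟫| := by
        rw [abs_mul, abs_of_nonneg (by positivity)]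
    _ ≤ ‖x‖ ^ (α - 2) * (‖x‖ * (K * ‖x‖ ^ (1 - α + δ))) := by
        gcongr
        exact (abs_real_inner_le_norm x v).trans (by gcongr)
    _ = K * ‖x‖ ^ δ := by rw [← hexp]; ring

variable {L : E →L[ℝ] E} {κ g₁ g₂ K α δ t₀ T : ℝ} {z g : ℝ → E} {G : ℝ → ℝ}

theorem exists_norm_rpow_bounds_of_hasDerivAt (hα : 0 < α) (hδ : 0 < δ) (hT : t₀ < T)
    (hκ : 0 < κ) (hL : ∀ x, κ * ‖x‖ ^ 2 ≤ ⟪x, L x⟫) (hg₁ : 0 < g₁)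
    (hz : ContinuousOn z (Ico t₀ T)) (hz0 : ∀ t ∈ Ico t₀ T, z t ≠ 0)
    (hlim : Tendsto z (𝓝[<] T) (𝓝 0))
    (hderiv : ∀ t ∈ Ioo t₀ T, HasDerivAt z (-(G t) • L (z t) + g t) t)
    (hG : ∀ t ∈ Ico t₀ T, g₁ * ‖z t‖ ^ (-α) ≤ G t ∧ G t ≤ g₂ * ‖z t‖ ^ (-α))
    (hg : ∀ t ∈ Ico t₀ T, ‖g t‖ ≤ K * ‖z t‖ ^ (1 - α + δ)) :
    ∃ K₁ K₂ : ℝ, 0 < K₁ ∧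
      ∀ t ∈ Ico t₀ T, K₁ * (T - t) ≤ ‖z t‖ ^ α ∧ ‖z t‖ ^ α ≤ K₂ * (T - t) := by
  set ψ' : ℝ → ℝ := fun t => α * ‖z t‖ ^ (α - 2) * ⟪z t, -(G t) • L (z t) + g t⟫
  have hψ : ∀ t ∈ Ioo t₀ T, HasDerivAt (fun s => ‖z s‖ ^ α) (ψ' t) t := fun t ht =>
    (hderiv t ht).norm_rpow (hz0 t (Ioo_subset_Ico_self ht)) α
  have hψlim : Tendsto (fun s => ‖z s‖ ^ α) (𝓝[<] T) (𝓝 0) := by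
    simpa [zero_rpow hα.ne'] using hlim.norm.rpow_const (.inr hα.le)
  -- The perturbation enters `ψ'` with relative size `K ‖z‖^δ`; near `T` it is at most half of
  -- the dissipation rate `g₁ κ`.
  have hsmall : ∀ᶠ t in 𝓝[<] T, K * ‖z t‖ ^ δ ≤ g₁ * κ / 2 := by
    have : Tendsto (fun t => K * ‖z t‖ ^ δ) (𝓝[<] T) (𝓝 0) := by
      simpa [zero_rpow hδ.ne'] using (hlim.norm.rpow_const (.inr hδ.le)).const_mul K
    exact this.eventually (eventually_le_nhds (by positivity))
  obtain ⟨a, ha, hsub⟩ := mem_nhdsLT_iff_exists_Ioo_subset.mp hsmall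
  have hψ' : ∀ t ∈ Ioo (max a t₀) T,
      -(α * (g₂ * ‖L‖ + g₁ * κ / 2)) ≤ ψ' t ∧ ψ' t ≤ -(α * (g₁ * κ / 2)) := by
    intro t ht
    have ht₀ : t ∈ Ico t₀ T := ⟨(le_max_right _ _).trans ht.1.le, ht.2⟩
    have hsm : K * ‖z t‖ ^ δ ≤ g₁ * κ / 2 := hsub ⟨(le_max_left _ _).trans_lt ht.1, ht.2⟩
    obtain ⟨hq₁, hq₂⟩ := mul_rpow_mul_inner_bounds (hz0 t ht₀) hκ.le (hL _) hg₁.le (hG t ht₀)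
    obtain ⟨hf₁, hf₂⟩ := abs_le.mp (abs_rpow_mul_inner_le (hz0 t ht₀) (hg t ht₀))
    have hψ't : ψ' t = α * (-(G t * (‖z t‖ ^ (α - 2) * ⟪z t, L (z t)⟫)) +
        ‖z t‖ ^ (α - 2) * ⟪z t, g t⟫) := by
      simp only [ψ', inner_add_right, inner_smul_right]; ring
    rw [hψ't]
    constructor <;> nlinarith
  have hψ_near : ∀ t ∈ Ioo (max a t₀) T, α * (g₁ * κ / 2) * (T - t) ≤ ‖z t‖ ^ α ∧
      ‖z t‖ ^ α ≤ α * (g₂ * ‖L‖ + g₁ * κ / 2) * (T - t) := by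
    intro t ht
    have hψ₀ : ∀ x ∈ Ioo (max a t₀) T, HasDerivAt (fun s => ‖z s‖ ^ α) (ψ' x) x := fun x hx =>
      hψ x (Ioo_subset_Ioo_left (le_max_right _ _) hx)
    have hupper := sub_mul_le_of_hasDerivAt_le (ψ := fun s => -‖z s‖ ^ α)
      (fun x hx => (hψ₀ x hx).neg)
      (fun x hx => neg_le.mpr (hψ' x hx).1) (by simpa using hψlim.neg) ht
    have hlower := sub_mul_le_of_hasDerivAt_le hψ₀ (fun x hx => (hψ' x hx).2) hψlim ht
    constructor <;> linarith
  exact exists_mul_sub_bounds_Ico_of_bounds_Ioo (hz.norm.rpow_const fun _ _ => .inr hα.le)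
    (fun t ht => rpow_pos_of_pos (norm_pos_iff.mpr (hz0 t ht)) α) (max_lt ha hT)
    (by positivity) hψ_near

theorem exists_inv_bounds_of_hasDerivAt (hα : 0 < α) (hδ : 0 < δ) (hT : t₀ < T)
    (hκ : 0 < κ) (hL : ∀ x, κ * ‖x‖ ^ 2 ≤ ⟪x, L x⟫) (hg₁ : 0 < g₁) (hg₂ : 0 < g₂)
    (hz : ContinuousOn z (Ico t₀ T)) (hz0 : ∀ t ∈ Ico t₀ T, z t ≠ 0)
    (hlim : Tendsto z (𝓝[<] T) (𝓝 0))
    (hderiv : ∀ t ∈ Ioo t₀ T, HasDerivAt z (-(G t) • L (z t) + g t) t)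
    (hG : ∀ t ∈ Ico t₀ T, g₁ * ‖z t‖ ^ (-α) ≤ G t ∧ G t ≤ g₂ * ‖z t‖ ^ (-α))
    (hg : ∀ t ∈ Ico t₀ T, ‖g t‖ ≤ K * ‖z t‖ ^ (1 - α + δ)) :
    ∃ C₃ C₄ : ℝ, 0 < C₃ ∧ 0 < C₄ ∧
      ∀ t ∈ Ico t₀ T, C₃ * (T - t)⁻¹ ≤ G t ∧ G t ≤ C₄ * (T - t)⁻¹ := by
  obtain ⟨K₁, K₂, hK₁, hK⟩ :=
    exists_norm_rpow_bounds_of_hasDerivAt hα hδ hT hκ hL hg₁ hz hz0 hlim hderiv hG hg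
  have hψpos : ∀ t ∈ Ico t₀ T, 0 < ‖z t‖ ^ α := fun t ht =>
    rpow_pos_of_pos (norm_pos_iff.mpr (hz0 t ht)) α
  have hK₂ : 0 < K₂ := by
    have ht₀ : t₀ ∈ Ico t₀ T := ⟨le_rfl, hT⟩
    exact pos_of_mul_pos_left ((hψpos t₀ ht₀).trans_le (hK t₀ ht₀).2) (by linarith)
  refine ⟨g₁ / K₂, g₂ / K₁, by positivity, by positivity, fun t ht => ?_⟩
  have hTt : 0 < T - t := sub_pos.mpr ht.2
  obtain ⟨hψ₁, hψ₂⟩ := hK t ht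
  obtain ⟨hG₁, hG₂⟩ := hG t ht
  rw [rpow_neg (norm_nonneg _)] at hG₁ hG₂
  constructor
  · calc g₁ / K₂ * (T - t)⁻¹ = g₁ * (K₂ * (T - t))⁻¹ := by rw [mul_inv]; ring
      _ ≤ g₁ * (‖z t‖ ^ α)⁻¹ := by gcongr; exact hψpos t ht
      _ ≤ G t := hG₁
  · calc G t ≤ g₂ * (‖z t‖ ^ α)⁻¹ := hG₂
      _ ≤ g₂ * (K₁ * (T - t))⁻¹ := by gcongr
      _ = g₂ / K₁ * (T - t)⁻¹ := by rw [mul_inv]; ring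

end InnerProductSpace

theorem H_of_solution_two_sided_rate_general (n : ℕ)
    (α δ M t₀ T' : ℝ) (hα : 0 < α) (hδ : 0 < δ)
    (hT' : t₀ < T')
    (A : Matrix (Fin n) (Fin n) ℝ)
    (hA : ∃ S D : Matrix (Fin n) (Fin n) ℝ, IsUnit S ∧ D.IsDiag ∧
      (∀ i, 0 < D i i) ∧ A = S⁻¹ * D * S)
    (H : EuclideanSpace ℝ (Fin n) → ℝ)
    (hHhom : ∀ x : EuclideanSpace ℝ (Fin n), x ≠ 0 → ∀ s : ℝ, 0 < s →
      H (s • x) = s ^ (-α) * H x)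
    (hHpos : ∀ x : EuclideanSpace ℝ (Fin n), ‖x‖ = 1 → 0 < H x)
    (hHcont : ContinuousOn H (Metric.sphere (0 : EuclideanSpace ℝ (Fin n)) 1))
    (y f : ℝ → EuclideanSpace ℝ (Fin n))
    (hycont : ContinuousOn y (Ico t₀ T'))
    (hyne : ∀ t ∈ Ico t₀ T', y t ≠ 0)
    (hylim : Tendsto y (𝓝[<] T') (𝓝 0))
    (hode : ∀ t ∈ Ioo t₀ T', HasDerivAt y (-(H (y t)) • mulVecE A (y t) + f t) t)
    (hfb : ∀ t ∈ Ico t₀ T', ‖f t‖ ≤ M * ‖y t‖ ^ (1 - α + δ))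
    :
    ∃ C₃ C₄ : ℝ, 0 < C₃ ∧ 0 < C₄ ∧
      ∀ t ∈ Ico t₀ T',
        C₃ * (T' - t)⁻¹ ≤ H (y t) ∧ H (y t) ≤ C₄ * (T' - t)⁻¹ := by
  obtain ⟨S, D, hS, hD, hDpos, rfl⟩ := hA
  let e : EuclideanSpace ℝ (Fin n) ≃L[ℝ] EuclideanSpace ℝ (Fin n) :=
    ContinuousLinearEquiv.unitsEquiv ℝ _ (hS.map (Matrix.toEuclideanCLM (𝕜 := ℝ))).unit
  obtain ⟨g₁, g₂, hg₁, hg₂, hH⟩ := e.exists_norm_rpow_bounds_of_homogeneous hHhom hHpos hHcont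
  obtain ⟨K, hK⟩ := e.exists_norm_apply_le_mul_rpow M (1 - α + δ)
  obtain ⟨κ, hκ, hD⟩ : ∃ κ > 0, ∀ x, κ * ‖x‖ ^ 2 ≤ ⟪x, Matrix.toEuclideanCLM (𝕜 := ℝ) D x⟫ := by
    simpa only [hD.diagonal_diag] using
      Matrix.exists_pos_mul_norm_sq_le_inner_toEuclideanCLM_diagonal (d := D.diag) hDpos
  refine exists_inv_bounds_of_hasDerivAt (z := fun t => e (y t)) (g := fun t => e (f t)) hα hδ hT'
    hκ hD hg₁ hg₂ (e.continuous.comp_continuousOn hycont)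
    (fun t ht => e.map_ne_zero_iff.mpr (hyne t ht))
    ((e.continuous.tendsto' 0 0 (map_zero e)).comp hylim) (fun t ht => ?_)
    (fun t ht => hH _ (hyne t ht)) (fun t ht => hK _ _ (hfb t ht))
  simpa [Function.comp_def, e, toEuclideanCLM_apply_mulVecE_conj hS] using
    e.hasFDerivAt.comp_hasDerivAt t (hode t ht)

theorem H_of_solution_two_sided_rate (n : ℕ) (hn : 1 ≤ n)
    (α δ M t₀ T' : ℝ) (hα : 0 < α) (hδ : 0 < δ) (hM : 0 < M)
    (ht₀ : 0 ≤ t₀) (hT' : t₀ < T')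
    (A : Matrix (Fin n) (Fin n) ℝ)
    (hA : ∃ S D : Matrix (Fin n) (Fin n) ℝ, IsUnit S ∧ D.IsDiag ∧
      (∀ i, 0 < D i i) ∧ A = S⁻¹ * D * S)
    (H : EuclideanSpace ℝ (Fin n) → ℝ)
    (hHhom : ∀ x : EuclideanSpace ℝ (Fin n), x ≠ 0 → ∀ s : ℝ, 0 < s →
      H (s • x) = s ^ (-α) * H x)
    (hHpos : ∀ x : EuclideanSpace ℝ (Fin n), ‖x‖ = 1 → 0 < H x)
    (hHcont : ContinuousOn H (Metric.sphere (0 : EuclideanSpace ℝ (Fin n)) 1))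
    (y f : ℝ → EuclideanSpace ℝ (Fin n))
    (hycont : ContinuousOn y (Ico t₀ T'))
    (hyne : ∀ t ∈ Ico t₀ T', y t ≠ 0)
    (hylim : Tendsto y (𝓝[<] T') (𝓝 0))
    (hode : ∀ t ∈ Ioo t₀ T', HasDerivAt y (-(H (y t)) • mulVecE A (y t) + f t) t)
    (hfcont : ContinuousOn f (Ico t₀ T'))
    (hfb : ∀ t ∈ Ico t₀ T', ‖f t‖ ≤ M * ‖y t‖ ^ (1 - α + δ))
    :
    ∃ C₃ C₄ : ℝ, 0 < C₃ ∧ 0 < C₄ ∧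
      ∀ t ∈ Ico t₀ T',
        C₃ * (T' - t)⁻¹ ≤ H (y t) ∧ H (y t) ≤ C₄ * (T' - t)⁻¹ :=
  H_of_solution_two_sided_rate_general n α δ M t₀ T' hα hδ hT' A hA H hHhom hHpos hHcont y f hycont
    hyne hylim hode hfb
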